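/- Let 0 < α < 1. Then there exists a unique τ in the open interval (1, 2) such that Γ(2α−τ) · Γ(τ+1) · sin(π(α−τ)) = Γ(2α) · sin(πα); moreover this unique τ satisfies 1 < τ, 2α < τ, and τ < 1 + α. (Writing τ = 1 + α_c, the number α_c depends only on α and satisfies 0 < α_c < α.) -/

import Mathlib

/-!
Write `F(τ) = Γ(2α-τ) Γ(τ+1) sin(π(α-τ))` and `C = Γ(2α) sin(πα) > 0`. By the reflection formula,
on the strip `2α < τ < 1+α` one has `F(τ) = π Γ(τ+1)/Γ(τ+1-2α) · sin(π(τ-α))/sin(π(τ-2α)) > 0`.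
The logarithm of the Gamma quotient grows with slope at most `4α` (compare `log Γ` with its Gauss
product, using `∑ 1/((a+j)(b+j)) ≤ 2` for `1 ≤ a ≤ b`), while the logarithm of the sine quotient
has slope `-π sin(πα)/(sin(π(τ-α)) sin(π(τ-2α))) < -4α`; so `F` is strictly decreasing on the strip.
A sign analysis of the reflection formula shows that every root in `(1, 2)` lies in the strip,
except possibly in `(2α+1, 2)`, which is excluded by `τ F(τ-1) = (τ-2α) F(τ)` and `(1-2α) F(1) = C`.
A root exists by the intermediate value theorem between `F(1+α) = 0` and either `F(1) > C` (if
`α < 1/2`) or the pole `F(τ) → +∞` as `τ ↓ 2α` (if `α ≥ 1/2`).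
-/

open Real Filter Set Topology

theorem sin_pi_mul_pos {x : ℝ} (h0 : 0 < x) (h1 : x < 1) : 0 < sin (π * x) :=
  sin_pos_of_pos_of_lt_pi (by positivity) (by nlinarith [pi_pos])

theorem ne_neg_natCast_of_neg_one_lt {s : ℝ} (h : -1 < s) (h0 : s ≠ 0) (m : ℕ) : s ≠ -m := by
  rintro rfl
  rcases m with _ | m
  · simp at h0
  · push_cast at h
    linarith [m.cast_nonneg (α := ℝ)]

theorem Gamma_two_mul_mul_sin_pos {α : ℝ} (hα : 0 < α) (hα1 : α < 1) :
    0 < Gamma (2 * α) * sin (π * α) :=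
  mul_pos (Gamma_pos_of_pos (by linarith)) (sin_pi_mul_pos hα hα1)

theorem sin_pi_mul_sub_pos {α τ : ℝ} (hα : 0 ≤ α) (hτ : τ ∈ Ioo (2 * α) (1 + α)) :
    0 < sin (π * (τ - 2 * α)) ∧ 0 < sin (π * (τ - α)) :=
  ⟨sin_pi_mul_pos (by linarith [hτ.1]) (by linarith [hτ.2]),
    sin_pi_mul_pos (by linarith [hτ.1]) (by linarith [hτ.2])⟩

theorem sum_range_inv_mul_le_two {a b : ℝ} (ha : 1 ≤ a) (hab : a ≤ b) (n : ℕ) :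
    ∑ j ∈ Finset.range n, ((a + j) * (b + j))⁻¹ ≤ 2 := by
  suffices h : ∑ j ∈ Finset.range n, ((a + j) * (b + j))⁻¹ ≤ 2 - 2 / (a + n) by
    have : 0 ≤ 2 / (a + n) := by positivity
    linarith
  induction n with
  | zero =>
    rw [Finset.sum_range_zero, Nat.cast_zero, add_zero, sub_nonneg, div_le_iff₀ (by linarith)]
    linarith
  | succ n ih =>
    rw [Finset.sum_range_succ]
    have hstep : ((a + n) * (b + n))⁻¹ ≤ 2 / (a + n) - 2 / (a + n + 1) := by
      rw [div_sub_div _ _ (by positivity) (by positivity), ← one_div,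
        div_le_div_iff₀ (by nlinarith) (by positivity)]
      nlinarith
    rw [Nat.cast_succ, ← add_assoc]
    linarith

theorem log_Gamma_add_sub_le {a c δ : ℝ} (ha : 1 ≤ a) (hc : 0 ≤ c) (hδ : 0 ≤ δ) :
    log (Gamma (a + c + δ)) - log (Gamma (a + c)) ≤
      log (Gamma (a + δ)) - log (Gamma a) + 2 * c * δ := by
  open BohrMollerup in
  have hlim := (((tendsto_log_gamma (x := a + c + δ) (by linarith)).sub
    (tendsto_log_gamma (x := a + c) (by linarith))).sub
    (tendsto_log_gamma (x := a + δ) (by linarith))).add (tendsto_log_gamma (x := a) (by linarith))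
  have hseq : ∀ n : ℕ, logGammaSeq (a + c + δ) n - logGammaSeq (a + c) n - logGammaSeq (a + δ) n
      + logGammaSeq a n = ∑ m ∈ Finset.range (n + 1),
        (log ((a + c + m) * (a + δ + m)) - log ((a + m) * (a + c + δ + m))) := by
    intro n
    have hm : ∀ m ∈ Finset.range (n + 1),
        log ((a + c + m) * (a + δ + m)) - log ((a + m) * (a + c + δ + m)) =
          log (a + c + m) + log (a + δ + m) - log (a + m) - log (a + c + δ + m) := by
      intro m _
      rw [log_mul (by positivity) (by positivity), log_mul (by positivity) (by positivity)]
      ring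
    rw [Finset.sum_congr rfl hm]
    simp only [logGammaSeq, Finset.sum_sub_distrib, Finset.sum_add_distrib]
    ring
  have hbound : ∀ n : ℕ, logGammaSeq (a + c + δ) n - logGammaSeq (a + c) n - logGammaSeq (a + δ) n
      + logGammaSeq a n ≤ 2 * c * δ := by
    intro n
    rw [hseq]
    calc ∑ m ∈ Finset.range (n + 1),
          (log ((a + c + m) * (a + δ + m)) - log ((a + m) * (a + c + δ + m)))
        ≤ ∑ m ∈ Finset.range (n + 1), c * δ * ((a + m) * (a + c + δ + m))⁻¹ := by
          refine Finset.sum_le_sum fun m _ => ?_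
          have hQ : 0 < (a + m) * (a + c + δ + m) := by positivity
          rw [← log_div (by positivity) hQ.ne']
          calc log ((a + c + m) * (a + δ + m) / ((a + m) * (a + c + δ + m)))
              ≤ (a + c + m) * (a + δ + m) / ((a + m) * (a + c + δ + m)) - 1 :=
                log_le_sub_one_of_pos (by positivity)
            _ = c * δ * ((a + m) * (a + c + δ + m))⁻¹ := by field_simp; ring
      _ = c * δ * ∑ m ∈ Finset.range (n + 1), ((a + m) * (a + c + δ + m))⁻¹ := by
          rw [Finset.mul_sum]
      _ ≤ c * δ * 2 := by
          gcongr
          exact sum_range_inv_mul_le_two ha (by linarith) _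
      _ = 2 * c * δ := by ring
  have := le_of_tendsto' hlim hbound
  linarith

theorem four_mul_sin_mul_sin_lt {α : ℝ} (hα : 0 < α) (hα1 : α < 1) (x : ℝ) :
    4 * α * (sin (π * (x - 2 * α)) * sin (π * (x - α))) < π * sin (π * α) := by
  set c := cos (π / 2 * α)
  set s := sin (π / 2 * α)
  have hc : 0 < c := cos_pos_of_mem_Ioo ⟨by nlinarith [pi_pos], by nlinarith [pi_pos]⟩
  have hc1 : c ≤ 1 := cos_le_one _
  have hs : α ≤ s := le_sin_mul hα.le hα1.le
  have hsin : sin (π * α) = 2 * s * c := by rw [← sin_two_mul]; ring_nf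
  have hprod : sin (π * (x - 2 * α)) * sin (π * (x - α)) ≤ c ^ 2 := by
    have h2 := two_mul_sin_mul_sin (π * (x - 2 * α)) (π * (x - α))
    have hcos : cos (π * (x - 2 * α) - π * (x - α)) = 2 * c ^ 2 - 1 := by
      rw [show π * (x - 2 * α) - π * (x - α) = -(2 * (π / 2 * α)) by ring, cos_neg, cos_two_mul]
    have := neg_one_le_cos (π * (x - 2 * α) + π * (x - α))
    linarith
  calc 4 * α * (sin (π * (x - 2 * α)) * sin (π * (x - α)))
      ≤ 4 * α * c := by gcongr; nlinarith
    _ < π * (2 * α * c) := by nlinarith [pi_gt_three, mul_pos hα hc]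
    _ ≤ π * sin (π * α) := by rw [hsin]; gcongr

theorem strictAntiOn_log_sin_sub_log_sin_add {α : ℝ} (hα : 0 < α) (hα1 : α < 1) :
    StrictAntiOn (fun τ ↦ log (sin (π * (τ - α))) - log (sin (π * (τ - 2 * α))) + 4 * α * τ)
      (Ioo (2 * α) (1 + α)) := by
  have hderiv : ∀ τ ∈ Ioo (2 * α) (1 + α), HasDerivAt
      (fun τ ↦ log (sin (π * (τ - α))) - log (sin (π * (τ - 2 * α))) + 4 * α * τ)
      (π * cos (π * (τ - α)) / sin (π * (τ - α)) - π * cos (π * (τ - 2 * α)) / sin (π * (τ - 2 * α))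
        + 4 * α) τ := by
    intro τ hτ
    have hlin : ∀ β : ℝ, HasDerivAt (fun τ ↦ π * (τ - β)) π τ := fun β ↦ by
      simpa using ((hasDerivAt_id τ).sub_const β).const_mul π
    have hA := ((hlin α).sin.log (sin_pi_mul_sub_pos hα.le hτ).2.ne')
    have hB := ((hlin (2 * α)).sin.log (sin_pi_mul_sub_pos hα.le hτ).1.ne')
    exact ((hA.sub hB).add ((hasDerivAt_id τ).const_mul (4 * α))).congr_deriv (by ring)
  refine strictAntiOn_of_deriv_neg (convex_Ioo _ _)
    (fun τ hτ ↦ (hderiv τ hτ).continuousAt.continuousWithinAt) fun τ hτ ↦ ?_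
  rw [interior_Ioo] at hτ
  obtain ⟨hB, hA⟩ := sin_pi_mul_sub_pos hα.le hτ
  have hlt := four_mul_sin_mul_sin_lt hα hα1 τ
  have h := sin_sub (π * (τ - 2 * α)) (π * (τ - α))
  rw [show π * (τ - 2 * α) - π * (τ - α) = -(π * α) by ring, sin_neg] at h
  rw [(hderiv τ hτ).deriv]
  set A := π * (τ - α)
  set B := π * (τ - 2 * α)
  have hnum : π * cos A / sin A - π * cos B / sin B + 4 * α =
      (4 * α * (sin B * sin A) - π * sin (π * α)) / (sin B * sin A) := by
    field_simp
    linear_combination (-π) * h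
  rw [hnum]
  exact div_neg_of_neg_of_pos (by linarith) (by positivity)

noncomputable def transcendentalFun (α τ : ℝ) : ℝ :=
  Gamma (2 * α - τ) * Gamma (τ + 1) * sin (π * (α - τ))

namespace transcendentalFun

variable {α τ : ℝ}

theorem apply_zero (α : ℝ) : transcendentalFun α 0 = Gamma (2 * α) * sin (π * α) := by
  simp [transcendentalFun]

theorem apply_one_add (α : ℝ) : transcendentalFun α (1 + α) = 0 := by
  simp [transcendentalFun]

theorem mul_apply_sub_one (hτ : τ ≠ 0) (h : 2 * α - τ ≠ 0) :
    τ * transcendentalFun α (τ - 1) = (τ - 2 * α) * transcendentalFun α τ := by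
  simp only [transcendentalFun]
  rw [show 2 * α - (τ - 1) = 2 * α - τ + 1 by ring, Gamma_add_one h, sub_add_cancel,
    Gamma_add_one hτ, show π * (α - (τ - 1)) = π * (α - τ) + π by ring, sin_add_pi]
  ring

theorem mul_Gamma (α τ : ℝ) :
    transcendentalFun α τ * Gamma (τ + 1 - 2 * α) =
      π * Gamma (τ + 1) * sin (π * (τ - α)) / sin (π * (τ - 2 * α)) := by
  have h := Gamma_mul_Gamma_one_sub (2 * α - τ)
  rw [show 1 - (2 * α - τ) = τ + 1 - 2 * α by ring] at h
  simp only [transcendentalFun]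
  rw [show π * (α - τ) = -(π * (τ - α)) by ring, show π * (τ - 2 * α) = -(π * (2 * α - τ)) by ring,
    sin_neg, sin_neg]
  calc Gamma (2 * α - τ) * Gamma (τ + 1) * -sin (π * (τ - α)) * Gamma (τ + 1 - 2 * α)
      = Gamma (2 * α - τ) * Gamma (τ + 1 - 2 * α) * (Gamma (τ + 1) * -sin (π * (τ - α))) := by ring
    _ = _ := by rw [h]; ring

theorem eq_div_of_lt (h : 2 * α < τ + 1) :
    transcendentalFun α τ =
      π * Gamma (τ + 1) * sin (π * (τ - α)) / sin (π * (τ - 2 * α)) / Gamma (τ + 1 - 2 * α) :=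
  eq_div_of_mul_eq (Gamma_pos_of_pos (by linarith)).ne' (mul_Gamma α τ)

theorem pos_of_mem_Ioo (hα : 0 ≤ α) (hτ : τ ∈ Ioo (2 * α) (1 + α)) :
    0 < transcendentalFun α τ := by
  obtain ⟨hA, hB⟩ := sin_pi_mul_sub_pos hα hτ
  have : 0 < Gamma (τ + 1) := Gamma_pos_of_pos (by linarith [hτ.1])
  have : 0 < Gamma (τ + 1 - 2 * α) := Gamma_pos_of_pos (by linarith [hτ.1])
  rw [eq_div_of_lt (by linarith [hτ.1])]
  positivity

theorem log_apply_of_mem_Ioo (hα : 0 ≤ α) (hτ : τ ∈ Ioo (2 * α) (1 + α)) :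
    log (transcendentalFun α τ) = log π + (log (Gamma (τ + 1)) - log (Gamma (τ + 1 - 2 * α))) +
      (log (sin (π * (τ - α))) - log (sin (π * (τ - 2 * α)))) := by
  obtain ⟨hA, hB⟩ := sin_pi_mul_sub_pos hα hτ
  have : 0 < Gamma (τ + 1) := Gamma_pos_of_pos (by linarith [hτ.1])
  have : 0 < Gamma (τ + 1 - 2 * α) := Gamma_pos_of_pos (by linarith [hτ.1])
  rw [eq_div_of_lt (by linarith [hτ.1]), log_div (by positivity) (by positivity),
    log_div (by positivity) (by positivity), log_mul (by positivity) (by positivity),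
    log_mul (by positivity) (by positivity)]
  ring

theorem one_sub_two_mul_mul_apply_one (h : 2 * α ≠ 1) :
    (1 - 2 * α) * transcendentalFun α 1 = Gamma (2 * α) * sin (π * α) := by
  have := mul_apply_sub_one (α := α) one_ne_zero (sub_ne_zero.2 h)
  rwa [sub_self, apply_zero, one_mul, eq_comm] at this

theorem strictAntiOn (hα : 0 < α) (hα1 : α < 1) :
    StrictAntiOn (transcendentalFun α) (Ioo (2 * α) (1 + α)) := by
  intro τ₁ h₁ τ₂ h₂ h12
  rw [← log_lt_log_iff (pos_of_mem_Ioo hα.le h₂) (pos_of_mem_Ioo hα.le h₁),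
    log_apply_of_mem_Ioo hα.le h₁, log_apply_of_mem_Ioo hα.le h₂]
  have hΓ := log_Gamma_add_sub_le (a := τ₁ + 1 - 2 * α) (c := 2 * α) (δ := τ₂ - τ₁)
    (by linarith [h₁.1]) (by linarith) (by linarith)
  rw [show τ₁ + 1 - 2 * α + 2 * α + (τ₂ - τ₁) = τ₂ + 1 by ring,
    show τ₁ + 1 - 2 * α + 2 * α = τ₁ + 1 by ring,
    show τ₁ + 1 - 2 * α + (τ₂ - τ₁) = τ₂ + 1 - 2 * α by ring] at hΓ
  have hsin := strictAntiOn_log_sin_sub_log_sin_add hα hα1 h₁ h₂ h12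
  linarith

theorem continuousOn (hα : 0 ≤ α) :
    ContinuousOn (transcendentalFun α) (Ioo (2 * α) (2 * α + 1)) := by
  intro τ hτ
  have hΓ : ∀ s : ℝ, -1 < s → s ≠ 0 → ContinuousAt Gamma s := fun s h h0 ↦
    (differentiableAt_Gamma (ne_neg_natCast_of_neg_one_lt h h0)).continuousAt
  have h1 : ContinuousAt (fun τ ↦ Gamma (2 * α - τ)) τ :=
    (hΓ _ (by linarith [hτ.2]) (by linarith [hτ.1])).comp (continuousAt_const.sub continuousAt_id)
  have h2 : ContinuousAt (fun τ ↦ Gamma (τ + 1)) τ :=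
    (hΓ _ (by linarith [hτ.1]) (by linarith [hτ.1])).comp (continuousAt_id.add continuousAt_const)
  exact ((h1.mul h2).mul (by fun_prop)).continuousWithinAt

theorem tendsto_nhdsGT (hα : 0 < α) (hα1 : α < 1) :
    Tendsto (transcendentalFun α) (𝓝[>] (2 * α)) atTop := by
  have hnum : Tendsto (fun τ ↦ Gamma (2 * α - τ + 1) * Gamma (τ + 1) * sin (π * (α - τ)))
      (𝓝[>] (2 * α)) (𝓝 (Gamma (2 * α + 1) * -sin (π * α))) := by
    have hΓ : ∀ s : ℝ, 0 < s → ContinuousAt Gamma s := fun s hs ↦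
      (differentiableAt_Gamma (ne_neg_natCast_of_neg_one_lt (by linarith) hs.ne')).continuousAt
    have h1 : ContinuousAt (fun τ ↦ Gamma (2 * α - τ + 1)) (2 * α) :=
      (hΓ _ (by linarith)).comp ((continuousAt_const.sub continuousAt_id).add continuousAt_const)
    have h2 : ContinuousAt (fun τ ↦ Gamma (τ + 1)) (2 * α) :=
      (hΓ _ (by linarith)).comp (continuousAt_id.add continuousAt_const)
    have h : ContinuousAt (fun τ ↦ Gamma (2 * α - τ + 1) * Gamma (τ + 1) * sin (π * (α - τ)))
        (2 * α) := (h1.mul h2).mul (by fun_prop)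
    convert h.tendsto.mono_left nhdsWithin_le_nhds using 2
    rw [sub_self, zero_add, Gamma_one, one_mul, show π * (α - 2 * α) = -(π * α) by ring, sin_neg]
  have hinv : Tendsto (fun τ ↦ (2 * α - τ)⁻¹) (𝓝[>] (2 * α)) atBot := by
    refine tendsto_inv_nhdsLT_zero.comp (tendsto_nhdsWithin_iff.2 ⟨?_, ?_⟩)
    · exact ((continuous_sub_left (2 * α)).tendsto' _ _ (sub_self _)).mono_left nhdsWithin_le_nhds
    · filter_upwards [self_mem_nhdsWithin] with τ hτ
      exact sub_neg.2 (mem_Ioi.1 hτ)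
  have hC : Gamma (2 * α + 1) * -sin (π * α) < 0 :=
    mul_neg_of_pos_of_neg (Gamma_pos_of_pos (by linarith)) (neg_neg_of_pos (sin_pi_mul_pos hα hα1))
  refine (hnum.neg_mul_atBot hC hinv).congr' ?_
  filter_upwards [self_mem_nhdsWithin] with τ hτ
  have hne : 2 * α - τ ≠ 0 := (sub_neg.2 hτ).ne
  rw [transcendentalFun, Gamma_add_one hne]
  field_simp

theorem exists_mem_Ioo_eq_of_lt (hα : 0 < α) {a y : ℝ} (ha : 2 * α < a)
    (ha1 : a ≤ 1 + α) (hy : 0 < y) (hya : y < transcendentalFun α a) :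
    ∃ τ ∈ Ioo a (1 + α), transcendentalFun α τ = y :=
  intermediate_value_Ioo' ha1 ((continuousOn hα.le).mono (Icc_subset_Ioo ha (by linarith)))
    ⟨by rwa [apply_one_add], hya⟩

theorem exists_eq_Gamma_mul_sin (hα : 0 < α) (hα1 : α < 1) :
    ∃ τ ∈ Ioo (1 : ℝ) 2, transcendentalFun α τ = Gamma (2 * α) * sin (π * α) := by
  have hC := Gamma_two_mul_mul_sin_pos hα hα1
  rcases lt_or_ge α (1 / 2) with hα2 | hα2
  · have h1 := one_sub_two_mul_mul_apply_one (α := α) (by linarith)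
    have hpos := pos_of_mem_Ioo (τ := 1) hα.le ⟨by linarith, by linarith⟩
    obtain ⟨τ, hτ, heq⟩ := exists_mem_Ioo_eq_of_lt hα (a := 1) (by linarith) (by linarith) hC
      (by nlinarith)
    exact ⟨τ, ⟨hτ.1, by linarith [hτ.2]⟩, heq⟩
  · obtain ⟨a, hCa, ha⟩ := (((tendsto_nhdsGT hα hα1).eventually (eventually_gt_atTop _)).and
      (Ioo_mem_nhdsGT (by linarith : 2 * α < 1 + α))).exists
    obtain ⟨τ, hτ, heq⟩ := exists_mem_Ioo_eq_of_lt hα ha.1 ha.2.le hC hCa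
    exact ⟨τ, ⟨by linarith [hτ.1, ha.1], by linarith [hτ.2]⟩, heq⟩

theorem lt_apply_of_two_mul_add_one_lt (hα : 0 < α) (hτ : 2 * α + 1 < τ) (hτ2 : τ < 2) :
    Gamma (2 * α) * sin (π * α) < transcendentalFun α τ := by
  have h1 := one_sub_two_mul_mul_apply_one (α := α) (by linarith)
  have hpos := pos_of_mem_Ioo (τ := 1) hα.le ⟨by linarith, by linarith⟩
  have hlt := strictAntiOn hα (by linarith) (show τ - 1 ∈ Ioo (2 * α) (1 + α) from
    ⟨by linarith, by linarith⟩) (show (1 : ℝ) ∈ Ioo (2 * α) (1 + α) from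
    ⟨by linarith, by linarith⟩) (by linarith)
  have hshift := mul_apply_sub_one (α := α) (τ := τ) (by linarith) (by linarith)
  have hC1 : Gamma (2 * α) * sin (π * α) < transcendentalFun α 1 := by nlinarith
  have hstep : (τ - 2 * α) * transcendentalFun α (τ - 1) < (τ - 2 * α) * transcendentalFun α τ := by
    nlinarith
  linarith [lt_of_mul_lt_mul_left hstep (by linarith)]

theorem apply_nonpos_of_notMem_Ioo (hα1 : α < 1) (hτ : 1 < τ) (hτ2 : τ ≤ 2 * α + 1)
    (hout : τ ∉ Ioo (2 * α) (1 + α)) : transcendentalFun α τ ≤ 0 := by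
  have hsign : sin (π * (τ - α)) / sin (π * (τ - 2 * α)) ≤ 0 := by
    refine div_nonpos_iff.2 ?_
    rw [mem_Ioo, not_and_or, not_lt, not_lt] at hout
    rcases hout with hle | hge
    · exact Or.inl ⟨sin_nonneg_of_nonneg_of_le_pi (by nlinarith [pi_pos])
        (by nlinarith [pi_pos]), sin_nonpos_of_nonpos_of_neg_pi_le (by nlinarith [pi_pos])
        (by nlinarith [pi_pos])⟩
    · refine Or.inr ⟨?_, sin_nonneg_of_nonneg_of_le_pi (by nlinarith [pi_pos])
        (by nlinarith [pi_pos])⟩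
      rw [← sin_sub_two_pi]
      exact sin_nonpos_of_nonpos_of_neg_pi_le (by nlinarith [pi_pos]) (by nlinarith [pi_pos])
  have hΓ : 0 < Gamma (τ + 1) := Gamma_pos_of_pos (by linarith)
  have h := mul_Gamma α τ
  rw [mul_div_assoc] at h
  have hprod : transcendentalFun α τ * Gamma (τ + 1 - 2 * α) ≤ 0 := by
    rw [h]
    exact mul_nonpos_of_nonneg_of_nonpos (by positivity) hsign
  exact nonpos_of_mul_nonpos_left hprod (Gamma_pos_of_pos (by linarith))

theorem mem_Ioo_of_eq_Gamma_mul_sin (hα : 0 < α) (hα1 : α < 1) (hτ : τ ∈ Ioo (1 : ℝ) 2)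
    (heq : transcendentalFun α τ = Gamma (2 * α) * sin (π * α)) : τ ∈ Ioo (2 * α) (1 + α) := by
  rcases lt_or_ge (2 * α + 1) τ with hhigh | hlow
  · exact absurd heq (lt_apply_of_two_mul_add_one_lt hα hhigh hτ.2).ne'
  · by_contra hout
    linarith [apply_nonpos_of_notMem_Ioo hα1 hτ.1 hlow hout, Gamma_two_mul_mul_sin_pos hα hα1]

end transcendentalFun

theorem existsUnique_root_transcendental_eq
    (α : ℝ) (hα : 0 < α) (hα' : α < 1) :
    (∃! τ : ℝ, τ ∈ Set.Ioo (1 : ℝ) 2 ∧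
        Real.Gamma (2 * α - τ) * Real.Gamma (τ + 1) * Real.sin (Real.pi * (α - τ)) =
          Real.Gamma (2 * α) * Real.sin (Real.pi * α)) ∧
      ∀ τ : ℝ, τ ∈ Set.Ioo (1 : ℝ) 2 →
        Real.Gamma (2 * α - τ) * Real.Gamma (τ + 1) * Real.sin (Real.pi * (α - τ)) =
          Real.Gamma (2 * α) * Real.sin (Real.pi * α) →
        1 < τ ∧ 2 * α < τ ∧ τ < 1 + α := by
  have hroot : ∀ τ ∈ Ioo (1 : ℝ) 2, transcendentalFun α τ = Gamma (2 * α) * sin (π * α) →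
      τ ∈ Ioo (2 * α) (1 + α) := fun τ hτ heq ↦
    transcendentalFun.mem_Ioo_of_eq_Gamma_mul_sin hα hα' hτ heq
  obtain ⟨τ₀, hτ₀, heq₀⟩ := transcendentalFun.exists_eq_Gamma_mul_sin hα hα'
  refine ⟨⟨τ₀, ⟨hτ₀, heq₀⟩, fun τ ⟨hτ, heq⟩ ↦ ?_⟩, fun τ hτ heq ↦ ⟨hτ.1, hroot τ hτ heq⟩⟩
  exact (transcendentalFun.strictAntiOn hα hα').injOn (hroot τ hτ heq) (hroot τ₀ hτ₀ heq₀)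
    (heq.trans heq₀.symm)
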